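/- (Quantitative Corollary 2) Suppose the recurrent weights U_r and U_c are orthogonal matrices (U_rᵀU_r = I and U_cᵀU_c = I), so in particular ‖U_r‖₂ = ‖U_c‖₂ = 1. Let h ∈ ℝⁿ with |h_i| ≤ 1 for every i, and let ε ≥ 0 be such that u(h)_i (1 − u(h)_i) ≤ ε and r(h)_i (1 − r(h)_i) ≤ ε for all i. Then the operator 2-norm of the Fréchet derivative of the GRU state-transition map F at h satisfies ‖D F(h)‖₂ ≤ 2 + ε (2‖U_u‖₂ + 1). -/

import Mathlib

/-! By the chain and product rules,
`DF(h) = diag(1 - u) + diag(h) ∘ D(1 - u) + diag(u) ∘ Dc + diag(c) ∘ Du`, with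
`Du = diag(σ') ∘ U_u`, `Dr = diag(σ') ∘ U_r` and `Dc = diag(1 - c²) ∘ U_c ∘ (diag(r) + diag(h) ∘ Dr)`.
Every diagonal factor has entries in `[-1, 1]`, and `σ' = σ (1 - σ) ≤ ε` at `h`; hence
`‖Du‖ ≤ ε ‖U_u‖`, `‖Dr‖ ≤ ε`, `‖Dc‖ ≤ 1 + ε`, and the triangle inequality gives
`‖DF(h)‖ ≤ 1 + ε ‖U_u‖ + (1 + ε) + ε ‖U_u‖`. -/

open Matrix
noncomputable section

/-- The sigmoid function `σ(t) = 1/(1+exp(-t))`. -/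
def sigmoid (t : ℝ) : ℝ := 1 / (1 + Real.exp (-t))

/-- The operator norm of a square matrix induced by the Euclidean norm. -/
def opNorm2 {n : ℕ} (M : Matrix (Fin n) (Fin n) ℝ) : ℝ :=
  ‖Matrix.toEuclideanCLM (𝕜 := ℝ) M‖

lemma sigmoid_eq_real_sigmoid : sigmoid = Real.sigmoid := funext fun _ => one_div _

lemma hasDerivAt_sigmoid (t : ℝ) : HasDerivAt sigmoid (sigmoid t * (1 - sigmoid t)) t :=
  sigmoid_eq_real_sigmoid ▸ Real.hasDerivAt_sigmoid t

lemma sigmoid_mem_Icc (t : ℝ) : sigmoid t ∈ Set.Icc 0 1 := by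
  rw [sigmoid_eq_real_sigmoid]
  exact ⟨Real.sigmoid_nonneg t, Real.sigmoid_le_one t⟩

lemma abs_sigmoid_le_one (t : ℝ) : |sigmoid t| ≤ 1 := by
  obtain ⟨h₀, h₁⟩ := sigmoid_mem_Icc t
  exact abs_le.2 ⟨by linarith, h₁⟩

lemma abs_one_sub_sigmoid_le_one (t : ℝ) : |1 - sigmoid t| ≤ 1 := by
  obtain ⟨h₀, h₁⟩ := sigmoid_mem_Icc t
  exact abs_le.2 ⟨by linarith, by linarith⟩

lemma sigmoid_mul_one_sub_nonneg (t : ℝ) : 0 ≤ sigmoid t * (1 - sigmoid t) := by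
  obtain ⟨h₀, h₁⟩ := sigmoid_mem_Icc t
  exact mul_nonneg h₀ (sub_nonneg.2 h₁)

lemma Real.hasDerivAt_tanh (t : ℝ) : HasDerivAt tanh (1 - tanh t ^ 2) t := by
  have h := (hasDerivAt_sinh t).div (hasDerivAt_cosh t) (cosh_pos t).ne'
  rw [show sinh / cosh = tanh from funext fun s => (tanh_eq_sinh_div_cosh s).symm] at h
  refine h.congr_deriv ?_
  rw [tanh_eq_sinh_div_cosh]
  field_simp

lemma Real.abs_one_sub_tanh_sq_le_one (t : ℝ) : |1 - tanh t ^ 2| ≤ 1 :=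
  abs_le.2 ⟨by linarith [tanh_sq_lt_one t], by linarith [sq_nonneg (tanh t)]⟩

section Euclidean

variable {ι H : Type*} [Fintype ι] [NormedAddCommGroup H] [NormedSpace ℝ H]
  {f g : H → EuclideanSpace ℝ ι} {f' g' : H →L[ℝ] EuclideanSpace ℝ ι} {y : H}

lemma hasFDerivAt_euclidean :
    HasFDerivAt f f' y ↔ ∀ i, HasFDerivAt (fun x => f x i) (PiLp.proj _ _ i ∘L f') y := by
  simp only [← hasFDerivWithinAt_univ, hasFDerivWithinAt_euclidean]

variable [DecidableEq ι]

def diagCLM (d : ι → ℝ) : EuclideanSpace ℝ ι →L[ℝ] EuclideanSpace ℝ ι :=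
  toEuclideanCLM (𝕜 := ℝ) (diagonal d)

@[simp] lemma diagCLM_apply (d : ι → ℝ) (v : EuclideanSpace ℝ ι) (i : ι) :
    diagCLM d v i = d i * v i := by
  simp [diagCLM, ofLp_toEuclideanCLM, mulVec_diagonal]

lemma norm_diagCLM_le {d : ι → ℝ} {C : ℝ} (hC : 0 ≤ C) (hd : ∀ i, |d i| ≤ C) :
    ‖diagCLM d‖ ≤ C := by
  rw [diagCLM, l2_opNorm_toEuclideanCLM, l2_opNorm_diagonal]
  exact (pi_norm_le_iff_of_nonneg hC).2 hd

lemma norm_diagCLM_comp_le {d : ι → ℝ} {C : ℝ} (hC : 0 ≤ C) (hd : ∀ i, |d i| ≤ C)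
    (L : H →L[ℝ] EuclideanSpace ℝ ι) : ‖diagCLM d ∘L L‖ ≤ C * ‖L‖ :=
  (ContinuousLinearMap.opNorm_comp_le _ L).trans <|
    mul_le_mul_of_nonneg_right (norm_diagCLM_le hC hd) (norm_nonneg L)

lemma norm_diagCLM_comp_add_diagCLM_comp_le {a b : ι → ℝ} {A B : ℝ} (hA : 0 ≤ A) (hB : 0 ≤ B)
    (ha : ∀ i, |a i| ≤ A) (hb : ∀ i, |b i| ≤ B) (L M : H →L[ℝ] EuclideanSpace ℝ ι) :
    ‖diagCLM a ∘L L + diagCLM b ∘L M‖ ≤ A * ‖L‖ + B * ‖M‖ :=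
  norm_add_le_of_le (norm_diagCLM_comp_le hA ha L) (norm_diagCLM_comp_le hB hb M)

lemma HasFDerivAt.euclidean_map {φ : ℝ → ℝ} {d : ι → ℝ} (hf : HasFDerivAt f f' y)
    (hφ : ∀ i, HasDerivAt φ (d i) (f y i)) :
    HasFDerivAt (fun x => WithLp.toLp 2 (fun i => φ (f x i))) (diagCLM d ∘L f') y := by
  refine hasFDerivAt_euclidean.2 fun i => ?_
  refine ((hφ i).comp_hasFDerivAt y (hasFDerivAt_euclidean.1 hf i)).congr_fderiv ?_
  ext v
  simp

lemma HasFDerivAt.euclidean_mul (hf : HasFDerivAt f f' y) (hg : HasFDerivAt g g' y) :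
    HasFDerivAt (fun x => WithLp.toLp 2 (fun i => f x i * g x i))
      (diagCLM (f y) ∘L g' + diagCLM (g y) ∘L f') y := by
  refine hasFDerivAt_euclidean.2 fun i => ?_
  refine ((hasFDerivAt_euclidean.1 hf i).mul (hasFDerivAt_euclidean.1 hg i)).congr_fderiv ?_
  ext v
  simp [add_comm]

end Euclidean

section Gru

variable {ι κ : Type*} [Fintype ι] [DecidableEq ι] [Fintype κ]
  (x : κ → ℝ) (W : Matrix ι κ ℝ) (U : Matrix ι ι ℝ) (b : EuclideanSpace ℝ ι)
  {v : EuclideanSpace ℝ ι} {ε : ℝ}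

lemma hasFDerivAt_preactivation :
    HasFDerivAt (fun w : EuclideanSpace ℝ ι =>
        WithLp.toLp 2 (fun i => (W *ᵥ x) i + (U *ᵥ w) i + b i))
      (toEuclideanCLM (𝕜 := ℝ) U) v := by
  have : (fun w : EuclideanSpace ℝ ι => WithLp.toLp 2 (fun i => (W *ᵥ x) i + (U *ᵥ w) i + b i))
      = fun w => toEuclideanCLM (𝕜 := ℝ) U w + (WithLp.toLp 2 (W *ᵥ x) + b) := by
    ext w i
    simp [ofLp_toEuclideanCLM]
    ring
  rw [this]
  exact (toEuclideanCLM (𝕜 := ℝ) U).hasFDerivAt.add_const _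

lemma exists_hasFDerivAt_sigmoid_gate_norm_le (hε : 0 ≤ ε)
    (hs : ∀ i, sigmoid ((W *ᵥ x) i + (U *ᵥ v) i + b i) *
      (1 - sigmoid ((W *ᵥ x) i + (U *ᵥ v) i + b i)) ≤ ε) :
    ∃ D : EuclideanSpace ℝ ι →L[ℝ] EuclideanSpace ℝ ι, HasFDerivAt (fun w : EuclideanSpace ℝ ι =>
        WithLp.toLp 2 (fun i => sigmoid ((W *ᵥ x) i + (U *ᵥ w) i + b i))) D v ∧
      ‖D‖ ≤ ε * ‖toEuclideanCLM (𝕜 := ℝ) U‖ :=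
  ⟨_, (hasFDerivAt_preactivation x W U b).euclidean_map fun _ => hasDerivAt_sigmoid _,
    norm_diagCLM_comp_le hε
      (fun i => (abs_of_nonneg (sigmoid_mul_one_sub_nonneg _)).trans_le (hs i)) _⟩

lemma exists_hasFDerivAt_candidate_norm_le {r : EuclideanSpace ℝ ι → EuclideanSpace ℝ ι}
    {R : EuclideanSpace ℝ ι →L[ℝ] EuclideanSpace ℝ ι} (hR : HasFDerivAt r R v) (hR_le : ‖R‖ ≤ ε)
    (hr : ∀ i, |r v i| ≤ 1) (hv : ∀ i, |v i| ≤ 1) :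
    ∃ D : EuclideanSpace ℝ ι →L[ℝ] EuclideanSpace ℝ ι, HasFDerivAt (fun w : EuclideanSpace ℝ ι =>
        WithLp.toLp 2 (fun i => Real.tanh ((W *ᵥ x) i + (U *ᵥ fun j => r w j * w j) i + b i)))
        D v ∧
      ‖D‖ ≤ ‖toEuclideanCLM (𝕜 := ℝ) U‖ * (1 + ε) := by
  have hG := hR.euclidean_mul (hasFDerivAt_id v)
  have hG_le : ‖diagCLM (r v) ∘L ContinuousLinearMap.id ℝ _ + diagCLM v ∘L R‖ ≤ 1 + ε := by
    have := norm_diagCLM_comp_add_diagCLM_comp_le zero_le_one zero_le_one hr hv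
      (ContinuousLinearMap.id ℝ _) R
    linarith [ContinuousLinearMap.norm_id_le (𝕜 := ℝ) (E := EuclideanSpace ℝ ι)]
  refine ⟨_, ((hasFDerivAt_preactivation x W U b).comp v hG).euclidean_map
    fun _ => Real.hasDerivAt_tanh _, ?_⟩
  calc _ ≤ 1 * ‖toEuclideanCLM (𝕜 := ℝ) U ∘L _‖ :=
        norm_diagCLM_comp_le zero_le_one (fun _ => Real.abs_one_sub_tanh_sq_le_one _) _
    _ ≤ _ := by
        rw [one_mul]
        exact (ContinuousLinearMap.opNorm_comp_le _ _).trans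
          (mul_le_mul_of_nonneg_left hG_le (norm_nonneg _))

end Gru

theorem ncgru_transition_deriv_norm_bound_general {n m : ℕ} (x : Fin m → ℝ)
    (Wr Wu Wc : Matrix (Fin n) (Fin m) ℝ) (Ur Uu Uc : Matrix (Fin n) (Fin n) ℝ)
    (br bu bc : EuclideanSpace ℝ (Fin n)) (h : EuclideanSpace ℝ (Fin n))
    (hUrnorm : opNorm2 Ur = 1) (hUcnorm : opNorm2 Uc = 1)
    (hh : ∀ i, |h i| ≤ 1) (ε : ℝ) (hε : 0 ≤ ε) :
    let r : EuclideanSpace ℝ (Fin n) → EuclideanSpace ℝ (Fin n) :=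
      fun h => WithLp.toLp 2 (fun i => sigmoid (Wr.mulVec x i + Ur.mulVec h i + br i))
    let u : EuclideanSpace ℝ (Fin n) → EuclideanSpace ℝ (Fin n) :=
      fun h => WithLp.toLp 2 (fun i => sigmoid (Wu.mulVec x i + Uu.mulVec h i + bu i))
    let c : EuclideanSpace ℝ (Fin n) → EuclideanSpace ℝ (Fin n) :=
      fun h => WithLp.toLp 2 (fun i => Real.tanh (Wc.mulVec x i + Uc.mulVec (fun j => r h j * h j) i + bc i))
    let F : EuclideanSpace ℝ (Fin n) → EuclideanSpace ℝ (Fin n) :=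
      fun h => WithLp.toLp 2 (fun i => (1 - u h i) * h i + u h i * c h i)
    (∀ i, u h i * (1 - u h i) ≤ ε) →
    (∀ i, r h i * (1 - r h i) ≤ ε) →
    ‖fderiv ℝ F h‖ ≤ 2 + ε * (2 * opNorm2 Uu + 1) := by
  intro r u c F hu hr
  obtain ⟨R, hR, hR_le⟩ := exists_hasFDerivAt_sigmoid_gate_norm_le x Wr Ur br hε hr
  obtain ⟨V, hV, hV_le⟩ := exists_hasFDerivAt_sigmoid_gate_norm_le x Wu Uu bu hε hu
  obtain ⟨C, hC, hC_le⟩ := exists_hasFDerivAt_candidate_norm_le x Wc Uc bc hR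
    (hR_le.trans_eq (by rw [← opNorm2, hUrnorm, mul_one])) (fun _ => abs_sigmoid_le_one _) hh
  have hV₁ := hV.euclidean_map (φ := (1 - ·)) fun _ => (hasDerivAt_id _).const_sub 1
  have hF : HasFDerivAt F _ h := (hV₁.euclidean_mul (hasFDerivAt_id h)).add (hV.euclidean_mul hC)
  rw [hF.fderiv]
  have hV₁_le : ‖(diagCLM fun _ => (-1 : ℝ)) ∘L V‖ ≤ ‖V‖ := by
    simpa using norm_diagCLM_comp_le zero_le_one (fun _ => by norm_num) V
  calc _ ≤ (1 * ‖ContinuousLinearMap.id ℝ _‖ + 1 * ‖(diagCLM fun _ => (-1 : ℝ)) ∘L V‖)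
        + (1 * ‖C‖ + 1 * ‖V‖) :=
        norm_add_le_of_le
          (norm_diagCLM_comp_add_diagCLM_comp_le zero_le_one zero_le_one
            (fun _ => abs_one_sub_sigmoid_le_one _) hh _ _)
          (norm_diagCLM_comp_add_diagCLM_comp_le zero_le_one zero_le_one
            (fun _ => abs_sigmoid_le_one _) (fun _ => (Real.abs_tanh_lt_one _).le) _ _)
    _ ≤ 2 + ε * (2 * opNorm2 Uu + 1) := by
        rw [← opNorm2, hUcnorm] at hC_le
        rw [← opNorm2] at hV_le
        linarith [ContinuousLinearMap.norm_id_le (𝕜 := ℝ) (E := EuclideanSpace ℝ (Fin n))]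

/-- Quantitative Corollary 2: suppose `U_r` and `U_c` are orthogonal
(`U_rᵀ U_r = I`, `U_cᵀ U_c = I`), so in particular `‖U_r‖₂ = ‖U_c‖₂ = 1`. If `|h_i| ≤ 1` for
all `i`, `ε ≥ 0`, and `u(h)_i (1 - u(h)_i) ≤ ε` and `r(h)_i (1 - r(h)_i) ≤ ε` for all `i`,
then the Fréchet derivative of the GRU state-transition map `F` at `h` satisfies
`‖D F(h)‖₂ ≤ 2 + ε (2‖U_u‖₂ + 1)`. -/
theorem ncgru_transition_deriv_norm_bound {n m : ℕ} (x : Fin m → ℝ)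
    (Wr Wu Wc : Matrix (Fin n) (Fin m) ℝ) (Ur Uu Uc : Matrix (Fin n) (Fin n) ℝ)
    (br bu bc : EuclideanSpace ℝ (Fin n)) (h : EuclideanSpace ℝ (Fin n))
    (hUr : Urᵀ * Ur = 1) (hUc : Ucᵀ * Uc = 1)
    (hUrnorm : opNorm2 Ur = 1) (hUcnorm : opNorm2 Uc = 1)
    (hh : ∀ i, |h i| ≤ 1) (ε : ℝ) (hε : 0 ≤ ε) :
    let r : EuclideanSpace ℝ (Fin n) → EuclideanSpace ℝ (Fin n) :=
      fun h => WithLp.toLp 2 (fun i => sigmoid (Wr.mulVec x i + Ur.mulVec h i + br i))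
    let u : EuclideanSpace ℝ (Fin n) → EuclideanSpace ℝ (Fin n) :=
      fun h => WithLp.toLp 2 (fun i => sigmoid (Wu.mulVec x i + Uu.mulVec h i + bu i))
    let c : EuclideanSpace ℝ (Fin n) → EuclideanSpace ℝ (Fin n) :=
      fun h => WithLp.toLp 2 (fun i => Real.tanh (Wc.mulVec x i + Uc.mulVec (fun j => r h j * h j) i + bc i))
    let F : EuclideanSpace ℝ (Fin n) → EuclideanSpace ℝ (Fin n) :=
      fun h => WithLp.toLp 2 (fun i => (1 - u h i) * h i + u h i * c h i)
    (∀ i, u h i * (1 - u h i) ≤ ε) →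
    (∀ i, r h i * (1 - r h i) ≤ ε) →
    ‖fderiv ℝ F h‖ ≤ 2 + ε * (2 * opNorm2 Uu + 1) :=
  ncgru_transition_deriv_norm_bound_general x Wr Wu Wc Ur Uu Uc br bu bc h hUrnorm hUcnorm hh ε hε
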